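/- arXiv:2009.09349 — 3 statements merged into one kernel-verified Lean document; each statement's English description precedes it below -/
import Mathlib

section
/- Let m ≥ 2, k ≥ 2, and 1 ≤ y < k, and consider a deck of m^k cards. The out m^y-shuffle O_{m^y} (the out shuffle for m^y stacks of m^{k−y} cards) equals the y-th power of the out m-shuffle, O_{m^y} = (O_m)^y, and sends the card with base-m index (x_1, …, x_k) to the position with base-m index (x_{y+1}, …, x_k, x_1, …, x_y). The in m^y-shuffle I_{m^y} (the in shuffle for m^y stacks of m^{k−y} cards) equals the y-th power of the in m-shuffle, I_{m^y} = (I_m)^y, and sends the card with base-m index (x_1, …, x_k) to the position with base-m index (x_{y+1}, …, x_k, x̄_1, …, x̄_y), where x̄ = (m−1) − x. -/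
private def dsum (m : ℕ) (x : ℕ → ℕ) (n : ℕ) : ℕ := ∑ t ∈ Finset.range n, x t * m ^ (n - 1 - t)

private lemma dsum_split (m : ℕ) (x : ℕ → ℕ) (c d : ℕ) :
    dsum m x (c + d) = dsum m x c * m ^ d + dsum m (fun t => x (t + c)) d := by
  unfold dsum
  rw [Finset.sum_range_add, Finset.sum_mul]
  congr 1
  · refine Finset.sum_congr rfl fun t ht => ?_
    simp only [Finset.mem_range] at ht
    have h : c + d - 1 - t = (c - 1 - t) + d := by omega
    rw [h, pow_add, ← mul_assoc]
  · refine Finset.sum_congr rfl fun t ht => ?_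
    simp only [Finset.mem_range] at ht
    have h : c + d - 1 - (c + t) = d - 1 - t := by omega
    rw [h, add_comm c t]

private lemma dsum_lt (m : ℕ) (hm : 1 ≤ m) : ∀ (n : ℕ) (x : ℕ → ℕ),
    (∀ t, t < n → x t < m) → dsum m x n < m ^ n := by
  intro n
  induction n with
  | zero => intro x _; simp [dsum]
  | succ n ih =>
    intro x hx
    have h2 : dsum m (fun t => x (t + 1)) n < m ^ n := ih _ (fun t ht => hx (t + 1) (by omega))
    have h3 : x 0 + 1 ≤ m := hx 0 (by omega)
    have h1 : dsum m x (n + 1) = x 0 * m ^ n + dsum m (fun t => x (t + 1)) n := by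
      have h := dsum_split m x 1 n
      rw [Nat.add_comm 1 n] at h
      simpa [dsum] using h
    calc dsum m x (n + 1) = x 0 * m ^ n + dsum m (fun t => x (t + 1)) n := h1
      _ < (x 0 + 1) * m ^ n := by rw [add_mul, one_mul]; omega
      _ ≤ m * m ^ n := Nat.mul_le_mul h3 (le_refl _)
      _ = m ^ (n + 1) := (pow_succ' m n).symm

private lemma geo (m : ℕ) (hm : 1 ≤ m) :
    ∀ n, ∑ t ∈ Finset.range n, (m - 1) * m ^ (n - 1 - t) = m ^ n - 1 := by
  intro n
  induction n with
  | zero => simp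
  | succ n ih =>
    rw [Finset.sum_range_succ']
    have h1 : ∑ t ∈ Finset.range n, (m - 1) * m ^ (n + 1 - 1 - (t + 1))
        = ∑ t ∈ Finset.range n, (m - 1) * m ^ (n - 1 - t) := by
      refine Finset.sum_congr rfl fun t ht => ?_
      simp only [Finset.mem_range] at ht
      congr 2
      omega
    rw [h1, ih]
    have h3 : n + 1 - 1 - 0 = n := by omega
    rw [h3]
    have h4 : (m - 1) * m ^ n + m ^ n = m ^ (n + 1) := by
      calc (m - 1) * m ^ n + m ^ n = ((m - 1) + 1) * m ^ n := by ring
        _ = m ^ (n + 1) := by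
            have h5 : m - 1 + 1 = m := by omega
            rw [h5, pow_succ, mul_comm]
    have h5 : 1 ≤ m ^ n := Nat.one_le_pow n m (by omega)
    omega

private lemma dsum_compl (m : ℕ) (hm : 1 ≤ m) (n : ℕ) (x : ℕ → ℕ) (hx : ∀ t, t < n → x t < m) :
    dsum m x n + dsum m (fun t => m - 1 - x t) n = m ^ n - 1 := by
  unfold dsum
  rw [← Finset.sum_add_distrib]
  calc ∑ t ∈ Finset.range n, (x t * m ^ (n - 1 - t) + (m - 1 - x t) * m ^ (n - 1 - t))
      = ∑ t ∈ Finset.range n, (m - 1) * m ^ (n - 1 - t) := by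
        refine Finset.sum_congr rfl fun t ht => ?_
        simp only [Finset.mem_range] at ht
        rw [← add_mul]
        have := hx t ht
        congr 1
        omega
    _ = m ^ n - 1 := geo m hm n

private lemma fin_sum_dsum (m k : ℕ) (g : ℕ → ℕ) :
    ∑ t : Fin k, g (t : ℕ) * m ^ (k - 1 - (t : ℕ)) = dsum m g k :=
  Fin.sum_univ_eq_sum_range (fun t => g t * m ^ (k - 1 - t)) k

private lemma mod_div_aux (X b c : ℕ) (hX : 0 < X) (hc : c < X) :
    (X * b + c) % X = c ∧ (X * b + c) / X = b := by
  constructor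
  · rw [Nat.mul_add_mod, Nat.mod_eq_of_lt hc]
  · rw [Nat.mul_add_div hX, Nat.div_eq_of_lt hc, add_zero]


private lemma mod_div_aux' (X b c : ℕ) (hX : 0 < X) (hc : c < X) :
    (X * b + c) % X = c ∧ (X * b + c) / X = b := by
  constructor
  · rw [Nat.mul_add_mod, Nat.mod_eq_of_lt hc]
  · rw [Nat.mul_add_div hX, Nat.div_eq_of_lt hc, add_zero]

private lemma shuffle_step (m k j i : ℕ) (hm : 2 ≤ m) (hj : j + 1 < k) (hi : i < m ^ k) :
    (m * ((m ^ j * (i % m ^ (k - j)) + i / m ^ (k - j)) % m ^ (k - 1))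
      + (m ^ j * (i % m ^ (k - j)) + i / m ^ (k - j)) / m ^ (k - 1)
    = m ^ (j + 1) * (i % m ^ (k - (j + 1))) + i / m ^ (k - (j + 1)))
    ∧
    (m * ((m ^ j * (i % m ^ (k - j)) + (m ^ j - 1 - i / m ^ (k - j))) % m ^ (k - 1))
      + (m - 1 - (m ^ j * (i % m ^ (k - j)) + (m ^ j - 1 - i / m ^ (k - j))) / m ^ (k - 1))
    = m ^ (j + 1) * (i % m ^ (k - (j + 1))) + (m ^ (j + 1) - 1 - i / m ^ (k - (j + 1)))) := by
  have hmpos : 0 < m := by omega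
  set e := k - j - 1 with he
  have he1 : 1 ≤ e := by omega
  have hkj : k - j = e + 1 := by omega
  have hk1 : k - 1 = j + e := by omega
  have hkj1 : k - (j + 1) = e := by omega
  rw [hkj, hk1, hkj1]
  set A := m ^ j with hA
  set E := m ^ e with hE
  have hApos : 0 < A := pow_pos hmpos j
  have hEpos : 0 < E := pow_pos hmpos e
  have hAE : m ^ (j + e) = A * E := by rw [hA, hE, pow_add]
  have hEm : m ^ (e + 1) = E * m := by rw [hE, pow_succ]
  have hmA : m ^ (j + 1) = m * A := by rw [hA, pow_succ, mul_comm]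
  rw [hAE, hEm, hmA]
  set q := i / (E * m) with hq
  set r := i % (E * m) with hr
  set s := i % E with hs
  set b := r / E with hb
  have hqA : q < A := by
    rw [hq, Nat.div_lt_iff_lt_mul (by positivity)]
    calc i < m ^ k := hi
      _ = A * (E * m) := by
          rw [hA, hE, ← mul_assoc, ← pow_add, ← pow_succ]
          congr 1
          omega
  have hrlt : r < E * m := Nat.mod_lt _ (by positivity)
  have hslt : s < E := Nat.mod_lt _ hEpos
  have hblt : b < m := by
    rw [hb, Nat.div_lt_iff_lt_mul hEpos]
    calc r < E * m := hrlt
      _ = m * E := mul_comm _ _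
  have hsr : s = r % E := by
    rw [hs, hr]
    exact (Nat.mod_mod_of_dvd i ⟨m, rfl⟩).symm
  have hrbs : r = E * b + s := by
    rw [hsr, hb]
    exact (Nat.div_add_mod r E).symm
  have hi2 : i = (E * m) * q + r := by
    rw [hq, hr]
    exact (Nat.div_add_mod i (E * m)).symm
  have hidiv : i / E = m * q + b := by
    have h3 : i = E * (m * q + b) + s := by
      conv_lhs => rw [hi2, hrbs]
      ring
    conv_lhs => rw [h3]
    rw [Nat.mul_add_div hEpos, Nat.div_eq_of_lt hslt, add_zero]
  clear_value A E q r s b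
  rw [hidiv]
  constructor
  · -- out shuffle
    have hvsplit : A * r + q = (A * E) * b + (A * s + q) := by rw [hrbs]; ring
    have hcs : A * s + q < A * E := by
      have h1 : A * (s + 1) = A * s + A := by ring
      have h2 : A * (s + 1) ≤ A * E := Nat.mul_le_mul (le_refl A) hslt
      omega
    obtain ⟨hvm, hvd⟩ := mod_div_aux' (A * E) b (A * s + q) (by positivity) hcs
    rw [hvsplit, hvm, hvd]
    ring
  · -- in shuffle
    set c := A - 1 - q with hc
    clear_value c
    have hcA : c < A := by omega
    have hvsplit : A * r + c = (A * E) * b + (A * s + c) := by rw [hrbs]; ring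
    have hcs : A * s + c < A * E := by
      have h1 : A * (s + 1) = A * s + A := by ring
      have h2 : A * (s + 1) ≤ A * E := Nat.mul_le_mul (le_refl A) hslt
      omega
    obtain ⟨hvm, hvd⟩ := mod_div_aux' (A * E) b (A * s + c) (by positivity) hcs
    rw [hvsplit, hvm, hvd]
    have hexpand : m * (A * s + c) = m * A * s + m * c := by ring
    rw [hexpand]
    have hsum : m * q + m * c + m = m * A := by
      have h4 : q + c + 1 = A := by omega
      calc m * q + m * c + m = m * (q + c + 1) := by ring
        _ = m * A := by rw [h4]
    have fin : ∀ P Q C T : ℕ, Q + C + m = T → b < m →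
        P + C + (m - 1 - b) = P + (T - 1 - (Q + b)) := by
      intro P Q C T h1 h2
      omega
    exact fin (m * A * s) (m * q) (m * c) (m * A) hsum hblt


private lemma O_pow_formula (m k : ℕ) (hm : 2 ≤ m) (O : Equiv.Perm (Fin (m ^ k)))
    (hO : ∀ i : Fin (m ^ k),
      (O i : ℕ) = m * ((i : ℕ) % m ^ (k - 1)) + (i : ℕ) / m ^ (k - 1)) :
    ∀ j, j < k → ∀ i : Fin (m ^ k),
      ((O ^ j) i : ℕ) = m ^ j * ((i : ℕ) % m ^ (k - j)) + (i : ℕ) / m ^ (k - j) := by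
  intro j
  induction j with
  | zero =>
    intro _ i
    simp only [pow_zero, Equiv.Perm.one_apply, Nat.sub_zero, one_mul]
    rw [Nat.mod_eq_of_lt i.isLt, Nat.div_eq_of_lt i.isLt, add_zero]
  | succ j ih =>
    intro hjk i
    have hstep := (shuffle_step m k j (i : ℕ) hm hjk i.isLt).1
    rw [pow_succ', Equiv.Perm.mul_apply, hO ((O ^ j) i), ih (by omega) i]
    exact hstep

private lemma I_pow_formula (m k : ℕ) (hm : 2 ≤ m) (I : Equiv.Perm (Fin (m ^ k)))
    (hI : ∀ i : Fin (m ^ k),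
      (I i : ℕ) = m * ((i : ℕ) % m ^ (k - 1)) + (m - 1 - (i : ℕ) / m ^ (k - 1))) :
    ∀ j, j < k → ∀ i : Fin (m ^ k),
      ((I ^ j) i : ℕ)
        = m ^ j * ((i : ℕ) % m ^ (k - j)) + (m ^ j - 1 - (i : ℕ) / m ^ (k - j)) := by
  intro j
  induction j with
  | zero =>
    intro _ i
    simp only [pow_zero, Equiv.Perm.one_apply, Nat.sub_zero, one_mul]
    rw [Nat.mod_eq_of_lt i.isLt, Nat.div_eq_of_lt i.isLt]
    omega
  | succ j ih =>
    intro hjk i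
    have hstep := (shuffle_step m k j (i : ℕ) hm hjk i.isLt).2
    rw [pow_succ', Equiv.Perm.mul_apply, hI ((I ^ j) i), ih (by omega) i]
    exact hstep

/-- For `m ≥ 2`, `k ≥ 2`, `1 ≤ y < k`, on a deck of `m^k` cards:
the out `m^y`-shuffle `Oy` (cut into `m^y` stacks of `m^(k−y)` cards) equals the `y`-th power
of the out `m`-shuffle `O`, and acts on base-`m` digit tuples by
`(x_1, …, x_k) ↦ (x_{y+1}, …, x_k, x_1, …, x_y)`; the in `m^y`-shuffle `Iy` equals the `y`-th
power of the in `m`-shuffle `I`, and acts by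
`(x_1, …, x_k) ↦ (x_{y+1}, …, x_k, x̄_1, …, x̄_y)` where `x̄ = (m−1) − x`. -/
theorem power_shuffles (m k y : ℕ) (hm : 2 ≤ m) (hk : 2 ≤ k) (hy1 : 1 ≤ y) (hyk : y < k)
    (O I Oy Iy : Equiv.Perm (Fin (m ^ k)))
    (hO : ∀ i : Fin (m ^ k),
      (O i : ℕ) = m * ((i : ℕ) % m ^ (k - 1)) + (i : ℕ) / m ^ (k - 1))
    (hI : ∀ i : Fin (m ^ k),
      (I i : ℕ) = m * ((i : ℕ) % m ^ (k - 1)) + (m - 1 - (i : ℕ) / m ^ (k - 1)))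
    (hOy : ∀ i : Fin (m ^ k),
      (Oy i : ℕ) = m ^ y * ((i : ℕ) % m ^ (k - y)) + (i : ℕ) / m ^ (k - y))
    (hIy : ∀ i : Fin (m ^ k),
      (Iy i : ℕ) = m ^ y * ((i : ℕ) % m ^ (k - y)) + (m ^ y - 1 - (i : ℕ) / m ^ (k - y))) :
    Oy = O ^ y ∧ Iy = I ^ y ∧
    (∀ x : Fin k → ℕ, (∀ t, x t < m) →
      ∀ i : Fin (m ^ k), (i : ℕ) = ∑ t : Fin k, x t * m ^ (k - 1 - (t : ℕ)) →
        (Oy i : ℕ) = ∑ t : Fin k,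
          x ⟨((t : ℕ) + y) % k, Nat.mod_lt _ (by omega)⟩ * m ^ (k - 1 - (t : ℕ))) ∧
    (∀ x : Fin k → ℕ, (∀ t, x t < m) →
      ∀ i : Fin (m ^ k), (i : ℕ) = ∑ t : Fin k, x t * m ^ (k - 1 - (t : ℕ)) →
        (Iy i : ℕ) = ∑ t : Fin k,
          (if h : (t : ℕ) + y < k then x ⟨(t : ℕ) + y, h⟩
           else m - 1 - x ⟨(t : ℕ) + y - k, by have := t.isLt; omega⟩)
            * m ^ (k - 1 - (t : ℕ))) := by
  have hmpos : 0 < m := by omega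
  refine ⟨?_, ?_, ?_, ?_⟩
  · refine Equiv.ext fun i => Fin.ext ?_
    rw [hOy i, O_pow_formula m k hm O hO y hyk i]
  · refine Equiv.ext fun i => Fin.ext ?_
    rw [hIy i, I_pow_formula m k hm I hI y hyk i]
  · -- Oy digit action
    intro x hx i hival
    classical
    set g : ℕ → ℕ := fun t => if h : t < k then x ⟨t, h⟩ else 0 with hg
    have hgx : ∀ t : Fin k, g (t : ℕ) = x t := fun t => by
      simp only [hg]
      rw [dif_pos t.isLt]
    have hglt : ∀ t, t < k → g t < m := fun t ht => by
      simp only [hg]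
      rw [dif_pos ht]
      exact hx _
    have hival' : (i : ℕ) = dsum m g k := by
      rw [hival, ← fin_sum_dsum m k g]
      exact Finset.sum_congr rfl fun t _ => by rw [hgx t]
    set A := dsum m g y with hAdef
    set B := dsum m (fun t => g (t + y)) (k - y) with hBdef
    have hsplit : (i : ℕ) = A * m ^ (k - y) + B := by
      rw [hival']
      have h := dsum_split m g y (k - y)
      rw [show y + (k - y) = k by omega] at h
      exact h
    have hBlt : B < m ^ (k - y) :=
      dsum_lt m (by omega) (k - y) _ (fun t ht => hglt (t + y) (by omega))
    have h1 : A * m ^ (k - y) + B = m ^ (k - y) * A + B := by ring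
    have hdiv : (i : ℕ) / m ^ (k - y) = A := by
      rw [hsplit, h1, Nat.mul_add_div (by positivity), Nat.div_eq_of_lt hBlt, add_zero]
    have hmod : (i : ℕ) % m ^ (k - y) = B := by
      rw [hsplit, h1, Nat.mul_add_mod, Nat.mod_eq_of_lt hBlt]
    rw [hOy i, hmod, hdiv]
    calc m ^ y * B + A = B * m ^ y + A := by ring
      _ = dsum m (fun t => g ((t + y) % k)) k := by
          have h := dsum_split m (fun t => g ((t + y) % k)) (k - y) y
          rw [show (k - y) + y = k by omega] at h
          rw [h, hBdef, hAdef]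
          congr 1
          · congr 1
            refine Finset.sum_congr rfl fun t ht => ?_
            simp only [Finset.mem_range] at ht
            simp only [Nat.mod_eq_of_lt (show t + y < k from by omega)]
          · refine Finset.sum_congr rfl fun t ht => ?_
            simp only [Finset.mem_range] at ht
            simp only [show t + (k - y) + y = t + k from by omega, Nat.add_mod_right,
              Nat.mod_eq_of_lt (show t < k from by omega)]
      _ = ∑ t : Fin k,
            x ⟨((t : ℕ) + y) % k, Nat.mod_lt _ (by omega)⟩ * m ^ (k - 1 - (t : ℕ)) := by
          rw [← fin_sum_dsum m k (fun t => g ((t + y) % k))]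
          refine Finset.sum_congr rfl fun t _ => ?_
          congr 1
          simp only [hg]
          rw [dif_pos (Nat.mod_lt _ (show 0 < k by omega))]
  · -- Iy digit action
    intro x hx i hival
    classical
    set g : ℕ → ℕ := fun t => if h : t < k then x ⟨t, h⟩ else 0 with hg
    have hgx : ∀ t : Fin k, g (t : ℕ) = x t := fun t => by
      simp only [hg]
      rw [dif_pos t.isLt]
    have hglt : ∀ t, t < k → g t < m := fun t ht => by
      simp only [hg]
      rw [dif_pos ht]
      exact hx _
    have hival' : (i : ℕ) = dsum m g k := by
      rw [hival, ← fin_sum_dsum m k g]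
      exact Finset.sum_congr rfl fun t _ => by rw [hgx t]
    set A := dsum m g y with hAdef
    set B := dsum m (fun t => g (t + y)) (k - y) with hBdef
    have hsplit : (i : ℕ) = A * m ^ (k - y) + B := by
      rw [hival']
      have h := dsum_split m g y (k - y)
      rw [show y + (k - y) = k by omega] at h
      exact h
    have hBlt : B < m ^ (k - y) :=
      dsum_lt m (by omega) (k - y) _ (fun t ht => hglt (t + y) (by omega))
    have h1 : A * m ^ (k - y) + B = m ^ (k - y) * A + B := by ring
    have hdiv : (i : ℕ) / m ^ (k - y) = A := by
      rw [hsplit, h1, Nat.mul_add_div (by positivity), Nat.div_eq_of_lt hBlt, add_zero]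
    have hmod : (i : ℕ) % m ^ (k - y) = B := by
      rw [hsplit, h1, Nat.mul_add_mod, Nat.mod_eq_of_lt hBlt]
    rw [hIy i, hmod, hdiv]
    set C := dsum m (fun t => m - 1 - g t) y with hCdef
    have hAC : A + C = m ^ y - 1 := dsum_compl m (by omega) y g (fun t ht => hglt t (by omega))
    have hCval : m ^ y - 1 - A = C := by omega
    set g2 : ℕ → ℕ := fun t => if t + y < k then g (t + y) else m - 1 - g (t + y - k) with hg2
    calc m ^ y * B + (m ^ y - 1 - A) = B * m ^ y + C := by rw [hCval]; ring
      _ = dsum m g2 k := by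
          have h := dsum_split m g2 (k - y) y
          rw [show (k - y) + y = k by omega] at h
          rw [h, hBdef, hCdef]
          congr 1
          · congr 1
            refine Finset.sum_congr rfl fun t ht => ?_
            simp only [Finset.mem_range] at ht
            simp only [hg2]
            rw [if_pos (show t + y < k from by omega)]
          · refine Finset.sum_congr rfl fun t ht => ?_
            simp only [Finset.mem_range] at ht
            simp only [hg2]
            rw [if_neg (show ¬ (t + (k - y) + y < k) from by omega),
              show t + (k - y) + y - k = t from by omega]
      _ = ∑ t : Fin k,
            (if h : (t : ℕ) + y < k then x ⟨(t : ℕ) + y, h⟩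
             else m - 1 - x ⟨(t : ℕ) + y - k, by have := t.isLt; omega⟩)
              * m ^ (k - 1 - (t : ℕ)) := by
          rw [← fin_sum_dsum m k g2]
          refine Finset.sum_congr rfl fun t _ => ?_
          congr 1
          simp only [hg2, hg]
          by_cases h : (t : ℕ) + y < k
          · rw [if_pos h, dif_pos h, dif_pos h]
          · rw [if_neg h, dif_neg h, dif_pos (show (t : ℕ) + y - k < k by
              have := t.isLt; omega)]
end

section
/- Let m ≥ 2 and k ≥ 1, and consider a deck of m^k cards with its in and out m-shuffles I_m and O_m. For 1 ≤ j ≤ k, define the shuffle B_j = O_m^{j−1} I_m O_m^{−j}, composed left to right (apply O_m^{j−1} first, then I_m, then O_m^{−j}). Then B_j flips exactly the j-th base-m digit: it sends the card with base-m index (x_1, …, x_k) to the position with base-m index (x_1, …, x_{j−1}, x̄_j, x_{j+1}, …, x_k), where x̄_j = (m−1) − x_j. -/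
/-!
Read in base `m`, the out-shuffle rotates the digit string one place to the left, and the in-shuffle
does the same after complementing the leading digit. So `O ^ (j - 1)` brings `x_j` to the front,
`I` complements it and rotates once more, and `O ^ (-j)` undoes the total rotation by `j` places.
-/

open Fin.NatCast

def digitsValue (m : ℕ) {n : ℕ} (x : Fin n → ℕ) : ℕ := ∑ t : Fin n, x t * m ^ (n - 1 - (t : ℕ))

def flipDigit (m : ℕ) {n : ℕ} (x : Fin n → ℕ) (a : Fin n) : Fin n → ℕ :=
  Function.update x a (m - 1 - x a)

section Digits

variable {m n : ℕ}

theorem digitsValue_succ (x : Fin (n + 1) → ℕ) :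
    digitsValue m x = x 0 * m ^ n + digitsValue m (Fin.tail x) := by
  rw [digitsValue, Fin.sum_univ_succ]
  congr 1
  refine Finset.sum_congr rfl fun t _ => ?_
  simp only [Fin.val_succ, Fin.tail]
  congr 2
  omega

theorem digitsValue_lt {x : Fin n → ℕ} (hx : ∀ t, x t < m) : digitsValue m x < m ^ n := by
  induction n with
  | zero => simp [digitsValue]
  | succ n ih =>
    have htail := ih (x := Fin.tail x) fun t => hx t.succ
    calc digitsValue m x < x 0 * m ^ n + m ^ n := by rw [digitsValue_succ]; omega
      _ = (x 0 + 1) * m ^ n := by ring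
      _ ≤ m * m ^ n := Nat.mul_le_mul_right _ (hx 0)
      _ = m ^ (n + 1) := by ring

theorem digitsValue_div_pow {x : Fin (n + 1) → ℕ} (hx : ∀ t, x t < m) :
    digitsValue m x / m ^ n = x 0 := by
  have hm : 0 < m := (Nat.zero_le _).trans_lt (hx 0)
  rw [digitsValue_succ, add_comm, Nat.add_mul_div_right _ _ (pow_pos hm n),
    Nat.div_eq_of_lt (digitsValue_lt (x := Fin.tail x) fun t => hx t.succ), zero_add]

theorem digitsValue_mod_pow {x : Fin (n + 1) → ℕ} (hx : ∀ t, x t < m) :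
    digitsValue m x % m ^ n = digitsValue m (Fin.tail x) := by
  rw [digitsValue_succ, add_comm, Nat.add_mul_mod_self_right,
    Nat.mod_eq_of_lt (digitsValue_lt (x := Fin.tail x) fun t => hx t.succ)]

theorem mul_digitsValue_tail_add (x : Fin (n + 1) → ℕ) :
    m * digitsValue m (Fin.tail x) + x 0 = digitsValue m fun t => x (t + 1) := by
  rw [digitsValue, digitsValue, Fin.sum_univ_castSucc, Finset.mul_sum, Fin.last_add_one]
  congr 1
  · refine Finset.sum_congr rfl fun t _ => ?_
    have ht : (t : ℕ) < n := t.isLt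
    rw [Fin.coeSucc_eq_succ, Fin.val_castSucc, Fin.tail,
      show n + 1 - 1 - (t : ℕ) = n - 1 - t + 1 by omega, pow_succ]
    ring
  · simp

theorem mul_mod_add_div_digitsValue (g : ℕ → ℕ) {x : Fin (n + 1) → ℕ} (hx : ∀ t, x t < m) :
    m * (digitsValue m x % m ^ n) + g (digitsValue m x / m ^ n) =
      digitsValue m fun t => Function.update x 0 (g (x 0)) (t + 1) := by
  rw [digitsValue_mod_pow hx, digitsValue_div_pow hx, ← mul_digitsValue_tail_add,
    Fin.tail_update_zero, Function.update_self]

theorem flipDigit_lt {x : Fin n → ℕ} (hx : ∀ t, x t < m) (a t : Fin n) : flipDigit m x a t < m := by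
  unfold flipDigit
  rcases eq_or_ne t a with rfl | h
  · have := hx t
    rw [Function.update_self]
    omega
  · rw [Function.update_of_ne h]
    exact hx t

theorem flipDigit_comp_addRight (x : Fin (n + 1) → ℕ) (a p : Fin (n + 1)) :
    flipDigit m (fun t => x (t + p)) a = fun t => flipDigit m x (a + p) (t + p) := by
  have := Function.update_comp_equiv x (Equiv.addRight p) (a + p) (m - 1 - x (a + p))
  simpa [flipDigit, Function.comp_def] using this.symm

theorem digitsValue_flipDigit (x : Fin n → ℕ) (a : Fin n) :
    digitsValue m (flipDigit m x a) =
      ∑ t : Fin n, (if (t : ℕ) = a then m - 1 - x t else x t) * m ^ (n - 1 - (t : ℕ)) := by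
  refine Finset.sum_congr rfl fun t _ => ?_
  simp only [flipDigit, Function.update_apply, Fin.ext_iff]
  split_ifs with h
  · rw [Fin.ext h]
  · rfl

end Digits

section Shuffles

variable {m n : ℕ} {O I : Equiv.Perm (Fin (m ^ (n + 1)))}

theorem outShuffle_pow_apply
    (hO : ∀ i : Fin (m ^ (n + 1)), (O i : ℕ) = m * ((i : ℕ) % m ^ n) + (i : ℕ) / m ^ n)
    (p : ℕ) {x : Fin (n + 1) → ℕ} (hx : ∀ t, x t < m) {i : Fin (m ^ (n + 1))}
    (hi : (i : ℕ) = digitsValue m x) :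
    ((O ^ p) i : ℕ) = digitsValue m fun t => x (t + (p : Fin (n + 1))) := by
  induction p with
  | zero => simpa using hi
  | succ p ih =>
    rw [pow_succ' O p, Equiv.Perm.mul_apply, hO, ih]
    refine (mul_mod_add_div_digitsValue id fun t => hx _).trans ?_
    simp only [id, Function.update_eq_self, Nat.cast_succ, add_assoc, add_comm (1 : Fin (n + 1))]

theorem inShuffle_apply
    (hI : ∀ i : Fin (m ^ (n + 1)),
      (I i : ℕ) = m * ((i : ℕ) % m ^ n) + (m - 1 - (i : ℕ) / m ^ n))
    {x : Fin (n + 1) → ℕ} (hx : ∀ t, x t < m) {i : Fin (m ^ (n + 1))}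
    (hi : (i : ℕ) = digitsValue m x) :
    (I i : ℕ) = digitsValue m fun t => flipDigit m x 0 (t + 1) := by
  rw [hI, hi, mul_mod_add_div_digitsValue (m - 1 - ·) hx, flipDigit]

end Shuffles

theorem B_j_flips_jth_digit_general (m k : ℕ)
    (O I : Equiv.Perm (Fin (m ^ k)))
    (hO : ∀ i : Fin (m ^ k),
      (O i : ℕ) = m * ((i : ℕ) % m ^ (k - 1)) + (i : ℕ) / m ^ (k - 1))
    (hI : ∀ i : Fin (m ^ k),
      (I i : ℕ) = m * ((i : ℕ) % m ^ (k - 1)) + (m - 1 - (i : ℕ) / m ^ (k - 1)))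
    (j : ℕ) (hj1 : 1 ≤ j) (hjk : j ≤ k)
    (B : Equiv.Perm (Fin (m ^ k))) (hB : B = (O⁻¹) ^ j * I * O ^ (j - 1)) :
    ∀ x : Fin k → ℕ, (∀ t, x t < m) →
      ∀ i : Fin (m ^ k), (i : ℕ) = ∑ t : Fin k, x t * m ^ (k - 1 - (t : ℕ)) →
        (B i : ℕ) = ∑ t : Fin k,
          (if (t : ℕ) = j - 1 then m - 1 - x t else x t) * m ^ (k - 1 - (t : ℕ)) := by
  obtain ⟨n, rfl⟩ : ∃ n, k = n + 1 := ⟨k - 1, by omega⟩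
  simp only [Nat.add_sub_cancel] at hO hI
  intro x hx i hi
  set a : Fin (n + 1) := ((j - 1 : ℕ) : Fin (n + 1))
  have ha : (a : ℕ) = j - 1 := Fin.val_cast_of_lt (by omega)
  have hj : ((j : ℕ) : Fin (n + 1)) = a + 1 := by
    rw [← Nat.sub_add_cancel hj1, Nat.cast_succ]
  have hIO : (I ((O ^ (j - 1)) i) : ℕ) =
      digitsValue m fun t => flipDigit m x a (t + (j : Fin (n + 1))) := by
    rw [inShuffle_apply hI (fun t => hx _) (outShuffle_pow_apply hO _ hx hi),
      flipDigit_comp_addRight, zero_add, hj]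
    simp only [add_assoc, add_comm (1 : Fin (n + 1))]
    rfl
  have hOj : (O ^ j) ⟨digitsValue m (flipDigit m x a), digitsValue_lt (flipDigit_lt hx a)⟩ =
      I ((O ^ (j - 1)) i) :=
    Fin.ext <| by rw [hIO, outShuffle_pow_apply hO j (flipDigit_lt hx a) rfl]
  rw [hB, Equiv.Perm.mul_apply, Equiv.Perm.mul_apply, ← hOj, inv_pow, Equiv.Perm.inv_def,
    Equiv.symm_apply_apply, Fin.val_mk, digitsValue_flipDigit, ha]

/-- For `m ≥ 2`, `k ≥ 1` and `1 ≤ j ≤ k`, the shuffle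
`B_j = O^(j−1) I O^(−j)` (composed left to right, i.e. apply `O^(j−1)` first, then `I`, then
`O^(−j)`; in Mathlib's right-to-left convention this is `(O⁻¹)^j * I * O^(j−1)`) flips exactly
the `j`-th base-`m` digit: it sends the card with digits `(x_1, …, x_k)` to the position with
digits `(x_1, …, x_{j−1}, (m−1)−x_j, x_{j+1}, …, x_k)`. -/
theorem B_j_flips_jth_digit (m k : ℕ) (hm : 2 ≤ m) (hk : 1 ≤ k)
    (O I : Equiv.Perm (Fin (m ^ k)))
    (hO : ∀ i : Fin (m ^ k),
      (O i : ℕ) = m * ((i : ℕ) % m ^ (k - 1)) + (i : ℕ) / m ^ (k - 1))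
    (hI : ∀ i : Fin (m ^ k),
      (I i : ℕ) = m * ((i : ℕ) % m ^ (k - 1)) + (m - 1 - (i : ℕ) / m ^ (k - 1)))
    (j : ℕ) (hj1 : 1 ≤ j) (hjk : j ≤ k)
    (B : Equiv.Perm (Fin (m ^ k))) (hB : B = (O⁻¹) ^ j * I * O ^ (j - 1)) :
    ∀ x : Fin k → ℕ, (∀ t, x t < m) →
      ∀ i : Fin (m ^ k), (i : ℕ) = ∑ t : Fin k, x t * m ^ (k - 1 - (t : ℕ)) →
        (B i : ℕ) = ∑ t : Fin k,
          (if (t : ℕ) = j - 1 then m - 1 - x t else x t) * m ^ (k - 1 - (t : ℕ)) :=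
  B_j_flips_jth_digit_general m k O I hO hI j hj1 hjk B hB
end

section
/- Let m, k > 1 and let y be a positive integer with y < k, and set c = gcd(y, k). If y/c is even, then on a deck of m^k cards the group ⟨I_{m^y}, O_{m^y}⟩ generated by the in and out m^y-shuffles is isomorphic to the semidirect product (ℤ/2ℤ)^{(k/c)−1} ⋊_φ ℤ/(k/c)ℤ, where the generator 1 of ℤ/(k/c)ℤ acts on (ℤ/2ℤ)^{(k/c)−1} by φ(1)·(a_1, a_2, …, a_{(k/c)−1}) = (a_{(k/c)−1}, a_1 + a_{(k/c)−1}, a_2 + a_{(k/c)−1}, …, a_{(k/c)−2} + a_{(k/c)−1}). In particular this group has order 2^{(k/c)−1}·(k/c) and is independent of m. -/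
/-!
Read a card position `i < m ^ k` as its base-`m` digit string `x : ZMod k → Fin m`. The out
shuffle rotates the string by `y`, and the in shuffle additionally complements
(`d ↦ m - 1 - d`) the digits in positions `[0, y)`. So both lie in the group of maps "rotate by
`s`, then complement where `e : ZMod k → ZMod 2` is `1`", which acts faithfully since `m > 1`.
Inside it, `⟨I, O⟩` is generated by the rotation by `y`, of order `n = k / c`, and the
complements along the arcs `V j = [j y, j y + y)`, `j : ZMod n`. The arcs cover every point
exactly `y / c` times, so `∑ V j = 0` when `y / c` is even; and since `V j x + V j (x - 1)` is
the indicator of `{j y, j y + y}`, this is their only relation. Hence `V 1, …, V (n - 1)` is a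
basis of the complement part, and the rotation by `y` acts on it by `V t ↦ V (t + 1)` and
`V (n - 1) ↦ V 0 = V 1 + ⋯ + V (n - 1)`, which is `φ 1`.
-/

open Equiv Multiplicative Finset

namespace Nat

theorem mul_sub_one_sub_div_mod {P Q a : ℕ} (hP : 0 < P) (ha : a < Q * P) :
    (Q * P - 1 - a) / P = Q - 1 - a / P ∧ (Q * P - 1 - a) % P = P - 1 - a % P := by
  refine (Nat.div_mod_unique hP).2 ⟨?_, by omega⟩
  obtain ⟨R, rfl⟩ : ∃ R, Q = a / P + R + 1 :=
    ⟨Q - (a / P + 1), by have := (Nat.div_lt_iff_lt_mul hP).2 ha; omega⟩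
  rw [show a / P + R + 1 - 1 - a / P = R by omega,
    show (a / P + R + 1) * P = P * (a / P) + P * R + P by ring]
  have := Nat.mod_add_div a P
  have := Nat.mod_lt a hP
  omega

variable {m : ℕ}

theorem mul_pow_add_div_pow_mod_of_lt {y j : ℕ} (r q : ℕ) (hj : j < y) :
    (m ^ y * r + q) / m ^ j % m = q / m ^ j % m := by
  obtain ⟨d, rfl⟩ := Nat.exists_eq_add_of_lt hj
  rw [show m ^ (j + d + 1) * r = (m * (m ^ d * r)) * m ^ j by ring]
  rcases (m ^ j).eq_zero_or_pos with h | h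
  · simp [h]
  · rw [Nat.add_comm, Nat.add_mul_div_right _ _ h, Nat.add_mul_mod_self_left]

theorem mul_pow_add_div_pow_of_le {q y j : ℕ} (r : ℕ) (hm : 0 < m) (hq : q < m ^ y)
    (hj : y ≤ j) : (m ^ y * r + q) / m ^ j = r / m ^ (j - y) := by
  obtain ⟨d, rfl⟩ := Nat.exists_eq_add_of_le hj
  rw [Nat.add_sub_cancel_left, pow_add, ← Nat.div_div_eq_div_mul, Nat.add_comm,
    Nat.add_mul_div_left _ _ (by positivity), Nat.div_eq_of_lt hq, zero_add]

theorem mod_pow_div_pow_mod {s j : ℕ} (i : ℕ) (hj : j < s) :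
    i % m ^ s / m ^ j % m = i / m ^ j % m := by
  obtain ⟨d, rfl⟩ := Nat.exists_eq_add_of_lt hj
  rw [Nat.add_assoc, pow_add, Nat.mod_mul_right_div_self,
    Nat.mod_mod_of_dvd _ (dvd_pow_self m d.succ_ne_zero)]

theorem pow_sub_one_sub_div_pow_mod {q y j : ℕ} (hm : 0 < m) (hq : q < m ^ y) (hj : j < y) :
    (m ^ y - 1 - q) / m ^ j % m = m - 1 - q / m ^ j % m := by
  obtain ⟨d, rfl⟩ := Nat.exists_eq_add_of_lt hj
  rw [show m ^ (j + d + 1) = m ^ d * m * m ^ j by ring] at hq ⊢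
  rw [(mul_sub_one_sub_div_mod (by positivity) hq).1,
    (mul_sub_one_sub_div_mod hm (Nat.div_lt_of_lt_mul (by rwa [mul_comm]))).2]

theorem div_pow_sub_lt_pow {i k y : ℕ} (hi : i < m ^ k) (hyk : y ≤ k) :
    i / m ^ (k - y) < m ^ y :=
  Nat.div_lt_of_lt_mul (by rwa [← pow_add, Nat.sub_add_cancel hyk])

end Nat

theorem ZMod.val_sub_natCast_of_le {k y : ℕ} [NeZero k] {j : ZMod k} (hyk : y < k)
    (h : y ≤ j.val) :
    (j - y).val = j.val - y := by
  rw [ZMod.val_sub (by rwa [ZMod.val_cast_of_lt hyk]), ZMod.val_cast_of_lt hyk]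

theorem ZMod.val_sub_natCast_of_lt {k y : ℕ} [NeZero k] {j : ZMod k} (hyk : y < k)
    (h : j.val < y) :
    (j - y).val = j.val + (k - y) := by
  have : j - y = j + ((k - y : ℕ) : ZMod k) := by simp [Nat.cast_sub hyk.le, sub_eq_add_neg]
  rw [this, ZMod.val_add_of_lt] <;> rw [ZMod.val_cast_of_lt (by omega)]
  omega

theorem ZMod.val_sub_one_of_ne_zero {n : ℕ} [NeZero n] {j : ZMod n} (hj : j ≠ 0) :
    (j - 1).val = j.val - 1 := by
  rcases Nat.lt_or_ge 1 n with hn | hn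
  · have : Fact (1 < n) := ⟨hn⟩
    have hj1 : 1 ≤ j.val := Nat.one_le_iff_ne_zero.2 ((ZMod.val_ne_zero j).2 hj)
    rw [ZMod.val_sub (by rwa [ZMod.val_one]), ZMod.val_one]
  · obtain rfl : n = 1 := le_antisymm hn (NeZero.pos n)
    exact absurd (Subsingleton.elim j 0) hj

theorem ZMod.val_neg_one' {n : ℕ} [NeZero n] : (-1 : ZMod n).val = n - 1 := by
  obtain ⟨n, rfl⟩ := Nat.exists_eq_succ_of_ne_zero (NeZero.ne n)
  exact ZMod.val_neg_one n

theorem ZMod.eq_zero_or_eq_one (a : ZMod 2) : a = 0 ∨ a = 1 := by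
  revert a; decide

namespace InOutShuffle

variable {m k n : ℕ}

def letterFlip : Multiplicative (ZMod k → ZMod 2) →* Perm (ZMod k → Fin m) where
  toFun e :=
    { toFun x j := if toAdd e j = 0 then x j else (x j).rev
      invFun x j := if toAdd e j = 0 then x j else (x j).rev
      left_inv x := funext fun j => by dsimp only; split_ifs <;> simp
      right_inv x := funext fun j => by dsimp only; split_ifs <;> simp }
  map_one' := by ext; simp
  map_mul' e f := Equiv.ext fun x => funext fun j => by
    simp only [Perm.coe_mul, Function.comp_apply, Equiv.coe_fn_mk, toAdd_mul, Pi.add_apply]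
    rcases ZMod.eq_zero_or_eq_one (toAdd e j) with ha | ha <;>
      rcases ZMod.eq_zero_or_eq_one (toAdd f j) with hb | hb <;>
      simp [ha, hb, show (1 : ZMod 2) + 1 = 0 from rfl]

theorem letterFlip_apply (e : Multiplicative (ZMod k → ZMod 2)) (x : ZMod k → Fin m)
    (j : ZMod k) :
    letterFlip e x j = if toAdd e j = 0 then x j else (x j).rev := rfl

def cyclicShift : Multiplicative (ZMod k) →* Perm (ZMod k → Fin m) where
  toFun s :=
    { toFun x j := x (j - toAdd s)
      invFun x j := x (j + toAdd s)
      left_inv x := by simp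
      right_inv x := by simp }
  map_one' := by ext; simp
  map_mul' s t := by ext; simp [sub_sub]

theorem cyclicShift_apply (s : Multiplicative (ZMod k)) (x : ZMod k → Fin m) (j : ZMod k) :
    cyclicShift s x j = x (j - toAdd s) := rfl

theorem cyclicShift_mul_letterFlip_mul_inv (s : Multiplicative (ZMod k))
    (e : Multiplicative (ZMod k → ZMod 2)) :
    cyclicShift s * letterFlip e * (cyclicShift s)⁻¹ =
      (letterFlip (ofAdd fun j => toAdd e (j - toAdd s)) : Perm (ZMod k → Fin m)) := by
  rw [mul_inv_eq_iff_eq_mul]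
  ext x j
  simp [letterFlip_apply, cyclicShift_apply]

theorem letterFlip_mul_cyclicShift_eq_one (hm : 1 < m) {e : Multiplicative (ZMod k → ZMod 2)}
    {s : Multiplicative (ZMod k)}
    (h : (letterFlip e * cyclicShift s : Perm (ZMod k → Fin m)) = 1) : e = 1 ∧ s = 1 := by
  have he : e = 1 := by
    funext j
    by_contra hj
    have := congr_fun (DFunLike.congr_fun h fun _ => ⟨0, by omega⟩) j
    simp [letterFlip_apply, cyclicShift_apply, Fin.ext_iff, Fin.val_rev] at this
    exact absurd (this hj) (by omega)
  subst he
  refine ⟨rfl, ?_⟩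
  have := congr_fun (DFunLike.congr_fun h fun j => if j = 0 then ⟨1, hm⟩ else ⟨0, by omega⟩)
    (toAdd s)
  simpa [cyclicShift_apply] using this

def digitEquiv (m k : ℕ) [NeZero k] : Fin (m ^ k) ≃ (ZMod k → Fin m) :=
  finFunctionFinEquiv.symm.trans ((ZMod.finEquiv k).toEquiv.arrowCongr (Equiv.refl _))

theorem digitEquiv_apply_val [NeZero k] (i : Fin (m ^ k)) (j : ZMod k) :
    (digitEquiv m k i j : ℕ) = i / m ^ j.val % m := by
  obtain ⟨k, rfl⟩ := Nat.exists_eq_succ_of_ne_zero (NeZero.ne k)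
  rfl

def arc (y : ℕ) (p : ZMod k) : ZMod k → ZMod 2 := fun x => if (x - p).val < y then 1 else 0

theorem arc_sub {y : ℕ} (p s x : ZMod k) : arc y p (x - s) = arc y (p + s) x := by
  simp only [arc, sub_sub, add_comm s]

def digitShuffles (m k y : ℕ) : Subgroup (Perm (ZMod k → Fin m)) :=
  Subgroup.closure {letterFlip (ofAdd (arc y 0)) * cyclicShift (ofAdd (y : ZMod k)),
    cyclicShift (ofAdd (y : ZMod k))}

section Arcs

variable [NeZero k] {y : ℕ}

theorem arc_add_arc_sub_one (hy0 : 0 < y) (hyk : y < k) (p x : ZMod k) :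
    arc y p x + arc y p (x - 1) = (if x = p then 1 else 0) + (if x = p + y then 1 else 0) := by
  have e1 : x = p ↔ x - p = 0 := sub_eq_zero.symm
  have e2 : x = p + y ↔ x - p = y := sub_eq_iff_eq_add'.symm
  simp only [arc, sub_right_comm x 1 p, e1, e2]
  generalize x - p = z
  have hzy : z = y ↔ z.val = y :=
    ⟨fun h => h ▸ ZMod.val_cast_of_lt hyk, fun h => by rw [← h, ZMod.natCast_zmod_val]⟩
  by_cases hz : z = 0
  · simp only [hzy]
    simp only [hz, zero_sub, ZMod.val_neg_one', ZMod.val_zero, if_pos hy0,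
      if_neg (show ¬k - 1 < y by omega), if_neg hy0.ne, if_true]
  · simp only [ZMod.val_sub_one_of_ne_zero hz, hzy, hz, if_false]
    split_ifs <;> first | omega | rfl

omit [NeZero k] in
theorem map_eq_natCast_val_mul [NeZero n] (ι : ZMod n →+ ZMod k) (hι1 : ι 1 = y) (j : ZMod n) :
    ι j = ((j.val * y : ℕ) : ZMod k) := by
  conv_lhs => rw [← ZMod.natCast_zmod_val j, ← nsmul_one, map_nsmul, hι1]
  simp

theorem card_filter_arc {u : ℕ} (hy0 : 0 < y) (hyk : y < k) (hnyk : n * y = u * k)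
    (ι : ZMod n →+ ZMod k) (hι1 : ι 1 = y) [NeZero n] (x : ZMod k) :
    #{j : ZMod n | (x - ι j).val < y} = u := by
  have hι := map_eq_natCast_val_mul ι hι1
  have hk : 0 < k := Nat.pos_of_ne_zero (NeZero.ne k)
  have hcount := Nat.count_modEq_card (u * k) hk x.val
  rw [Nat.mul_mod_left, Nat.mul_div_cancel _ hk, Nat.count_eq_card_filter_range] at hcount
  simp only [Nat.not_lt_zero, if_false, add_zero] at hcount
  rw [← hcount]
  have hNy : ∀ N < u * k, N % k = x.val → (x - ι ((N / y : ℕ) : ZMod n)).val = N % y := by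
    intro N hN hNx
    have hx : (N : ZMod k) = x := by rw [← ZMod.natCast_zmod_val x, ← hNx, ZMod.natCast_mod]
    have hdiv : N / y < n := Nat.div_lt_of_lt_mul (by rw [Nat.mul_comm, hnyk]; exact hN)
    have hmod : N - N / y * y = N % y := by have := Nat.div_add_mod' N y; omega
    rw [hι, ZMod.val_cast_of_lt hdiv, ← hx, ← Nat.cast_sub (Nat.div_mul_le_self N y), hmod,
      ZMod.val_cast_of_lt ((Nat.mod_lt N hy0).trans hyk)]
  -- The intervals `[j y, j y + y)`, `j < n`, tile `[0, u k)`; match `j` with the point of its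
  -- interval that is congruent to `x` mod `k`, if there is one.
  refine card_bij' (fun j _ => j.val * y + (x - ι j).val) (fun N _ => ((N / y : ℕ) : ZMod n))
    ?_ ?_ ?_ ?_
  · intro j hj
    simp only [mem_filter, mem_univ, true_and, mem_range] at hj ⊢
    refine ⟨?_, ?_⟩
    · have := Nat.mul_le_mul_right y (Nat.succ_le_of_lt j.val_lt)
      rw [Nat.succ_mul, hnyk] at this
      omega
    · rw [Nat.ModEq, Nat.mod_eq_of_lt x.val_lt, ← ZMod.val_natCast]
      simp [hι]
  · intro N hN
    simp only [mem_filter, mem_univ, true_and, mem_range, Nat.ModEq,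
      Nat.mod_eq_of_lt x.val_lt] at hN ⊢
    rw [hNy N hN.1 hN.2]
    exact Nat.mod_lt N hy0
  · intro j hj
    simp only [mem_filter, mem_univ, true_and] at hj
    rw [Nat.add_comm, Nat.add_mul_div_right _ _ hy0, Nat.div_eq_of_lt hj, zero_add,
      ZMod.natCast_zmod_val]
  · intro N hN
    simp only [mem_filter, mem_range, Nat.ModEq, Nat.mod_eq_of_lt x.val_lt] at hN
    rw [hNy N hN.1 hN.2,
      ZMod.val_cast_of_lt (Nat.div_lt_of_lt_mul (by rw [Nat.mul_comm, hnyk]; exact hN.1))]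
    exact Nat.div_add_mod' N y

theorem sum_arc_eq_zero {u : ℕ} (hy0 : 0 < y) (hyk : y < k) (hnyk : n * y = u * k)
    (heven : Even u) (ι : ZMod n →+ ZMod k) (hι1 : ι 1 = y) [NeZero n] :
    ∑ j, arc y (ι j) = 0 := by
  funext x
  simp only [Finset.sum_apply, arc, Finset.sum_boole, card_filter_arc hy0 hyk hnyk ι hι1,
    Pi.zero_apply]
  exact heven.natCast_zmod_two

theorem eq_of_sum_smul_arc_eq_zero (hy0 : 0 < y) (hyk : y < k) [NeZero n] (ι : ZMod n →+ ZMod k)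
    (hι1 : ι 1 = y) (hι : Function.Injective ι) {b : ZMod n → ZMod 2}
    (h : ∑ j, b j • arc y (ι j) = 0) (s : ZMod n) : b s = b 0 := by
  have step : ∀ s, b s = b (s - 1) := by
    intro s
    have hD : ∑ j, b j * (arc y (ι j) (ι s) + arc y (ι j) (ι s - 1)) = 0 := by
      have h1 := congr_fun h (ι s)
      have h2 := congr_fun h (ι s - 1)
      simp only [Finset.sum_apply, Pi.smul_apply, smul_eq_mul, Pi.zero_apply] at h1 h2
      simp only [mul_add, Finset.sum_add_distrib, h1, h2, add_zero]
    have e1 : ∀ j, ι s = ι j ↔ s = j := fun j => hι.eq_iff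
    have e2 : ∀ j, ι s = ι j + y ↔ s - 1 = j := fun j => by
      rw [← hι1, ← map_add, hι.eq_iff, sub_eq_iff_eq_add]
    simp only [arc_add_arc_sub_one hy0 hyk, e1, e2, mul_add, mul_ite, mul_one, mul_zero,
      Finset.sum_add_distrib, Finset.sum_ite_eq, Finset.mem_univ, if_true] at hD
    exact CharTwo.add_eq_zero.1 hD
  suffices ∀ r : ℕ, b r = b 0 by simpa using this s.val
  intro r
  induction r with
  | zero => simp
  | succ r ih => rw [step, Nat.cast_succ, add_sub_cancel_right, ih]

end Arcs

section Shuffles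

variable [NeZero k] {y : ℕ}

theorem digit_shuffle_of_le (hm : 0 < m) (hyk : y < k) (i : Fin (m ^ k)) {q : ℕ} (hq : q < m ^ y)
    {j : ZMod k} (hj : y ≤ j.val) :
    (m ^ y * (i % m ^ (k - y)) + q) / m ^ j.val % m = i / m ^ (j - y).val % m := by
  rw [Nat.mul_pow_add_div_pow_of_le _ hm hq hj, ZMod.val_sub_natCast_of_le hyk hj,
    Nat.mod_pow_div_pow_mod _ (by have := j.val_lt; omega)]

theorem div_pow_digit_of_lt (hyk : y < k) (i : Fin (m ^ k)) {j : ZMod k} (hj : j.val < y) :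
    i / m ^ (k - y) / m ^ j.val % m = i / m ^ (j - y).val % m := by
  rw [ZMod.val_sub_natCast_of_lt hyk hj, Nat.div_div_eq_div_mul, ← pow_add, Nat.add_comm]

theorem permCongrHom_outShuffle (hm : 0 < m) (hyk : y < k) (σ : Perm (Fin (m ^ k)))
    (hσ : ∀ i, (σ i : ℕ) = m ^ y * (i % m ^ (k - y)) + i / m ^ (k - y)) :
    (digitEquiv m k).permCongrHom σ = cyclicShift (ofAdd (y : ZMod k)) := by
  ext x j
  obtain ⟨i, rfl⟩ := (digitEquiv m k).surjective x
  simp only [Equiv.permCongrHom_coe, Equiv.permCongr_apply, Equiv.symm_apply_apply,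
    cyclicShift_apply, toAdd_ofAdd, digitEquiv_apply_val, hσ]
  rcases lt_or_ge j.val y with hj | hj
  · rw [Nat.mul_pow_add_div_pow_mod_of_lt _ _ hj, div_pow_digit_of_lt hyk i hj]
  · exact digit_shuffle_of_le hm hyk i (Nat.div_pow_sub_lt_pow i.isLt hyk.le) hj

theorem permCongrHom_inShuffle (hm : 0 < m) (hyk : y < k) (σ : Perm (Fin (m ^ k)))
    (hσ : ∀ i, (σ i : ℕ) = m ^ y * (i % m ^ (k - y)) + (m ^ y - 1 - i / m ^ (k - y))) :
    (digitEquiv m k).permCongrHom σ =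
      letterFlip (ofAdd (arc y 0)) * cyclicShift (ofAdd (y : ZMod k)) := by
  ext x j
  obtain ⟨i, rfl⟩ := (digitEquiv m k).surjective x
  simp only [Equiv.permCongrHom_coe, Equiv.permCongr_apply, Equiv.symm_apply_apply, Perm.coe_mul,
    Function.comp_apply, letterFlip_apply, cyclicShift_apply, toAdd_ofAdd, arc, sub_zero,
    digitEquiv_apply_val, hσ]
  rcases lt_or_ge j.val y with hj | hj
  · rw [if_pos hj, if_neg one_ne_zero, Fin.val_rev, digitEquiv_apply_val,
      Nat.mul_pow_add_div_pow_mod_of_lt _ _ hj,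
      Nat.pow_sub_one_sub_div_pow_mod hm (Nat.div_pow_sub_lt_pow i.isLt hyk.le) hj,
      div_pow_digit_of_lt hyk i hj]
    have := Nat.mod_lt (i / m ^ (j - y).val) hm
    omega
  · rw [if_neg hj.not_gt, if_pos rfl, digitEquiv_apply_val]
    exact digit_shuffle_of_le hm hyk i
      ((Nat.sub_le _ _).trans_lt (Nat.sub_lt (Nat.pow_pos hm) one_pos)) hj

theorem map_closure_inOutShuffle (hm : 0 < m) (hyk : y < k) (Oy Iy : Perm (Fin (m ^ k)))
    (hOy : ∀ i, (Oy i : ℕ) = m ^ y * (i % m ^ (k - y)) + i / m ^ (k - y))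
    (hIy : ∀ i, (Iy i : ℕ) = m ^ y * (i % m ^ (k - y)) + (m ^ y - 1 - i / m ^ (k - y))) :
    (Subgroup.closure {Iy, Oy}).map
        ((digitEquiv m k).permCongrHom : Perm (Fin (m ^ k)) →* Perm (ZMod k → Fin m)) =
      digitShuffles m k y := by
  rw [MonoidHom.map_closure, Set.image_pair, MonoidHom.coe_coe,
    permCongrHom_inShuffle hm hyk Iy hIy, permCongrHom_outShuffle hm hyk Oy hOy, digitShuffles]

end Shuffles

section Coordinates

variable [NeZero n]

-- `a t` is the coefficient of the arc starting at `ι (t + 1)`; the arc at `ι 0` gets `0`.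
def extendZero (a : Fin (n - 1) → ZMod 2) (j : ZMod n) : ZMod 2 :=
  if h : j.val = 0 then 0 else a ⟨j.val - 1, by have := j.val_lt; omega⟩

theorem extendZero_apply_of_val_eq (a : Fin (n - 1) → ZMod 2) {j : ZMod n} {t : Fin (n - 1)}
    (h : j.val = t + 1) : extendZero a j = a t := by
  rw [extendZero, dif_neg (by omega)]
  congr
  omega

theorem extendZero_apply_zero (a : Fin (n - 1) → ZMod 2) : extendZero a 0 = 0 := by
  simp [extendZero]

theorem extendZero_add (a b : Fin (n - 1) → ZMod 2) :
    extendZero (a + b) = extendZero a + extendZero b := by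
  funext j
  simp only [extendZero, Pi.add_apply]
  split_ifs <;> simp only [add_zero]

omit [NeZero n] in
def companionShift (a : Fin (n - 1) → ZMod 2) : Fin (n - 1) → ZMod 2 := fun t =>
  if (t : ℕ) = 0 then a ⟨n - 2, by have := t.isLt; omega⟩
  else a ⟨(t : ℕ) - 1, by have := t.isLt; omega⟩ + a ⟨n - 2, by have := t.isLt; omega⟩

theorem extendZero_companionShift (a : Fin (n - 1) → ZMod 2) (j : ZMod n) :
    extendZero (companionShift a) j = extendZero a (j - 1) + extendZero a (-1) := by
  by_cases hj : j = 0
  · rw [hj, zero_sub, extendZero_apply_zero, CharTwo.add_self_eq_zero]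
  have hj1 := ZMod.val_sub_one_of_ne_zero hj
  have hjv := (ZMod.val_ne_zero j).2 hj
  have hjn := j.val_lt
  have hlast : extendZero a (-1) = a ⟨n - 2, by omega⟩ :=
    extendZero_apply_of_val_eq a (by simp [ZMod.val_neg_one']; omega)
  rw [extendZero_apply_of_val_eq _ (t := ⟨j.val - 1, by omega⟩) (by simp; omega), hlast,
    companionShift]
  by_cases ht : j.val - 1 = 0
  · rw [if_pos ht, (ZMod.val_eq_zero _).1 (hj1.trans ht), extendZero_apply_zero, zero_add]
  · rw [if_neg ht, extendZero_apply_of_val_eq _ (t := ⟨j.val - 2, by omega⟩) (by simp; omega)]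
    rfl

def arcCombination (y : ℕ) (ι : ZMod n →+ ZMod k) :
    (Fin (n - 1) → ZMod 2) →+ (ZMod k → ZMod 2) where
  toFun a := ∑ j, extendZero a j • arc y (ι j)
  map_zero' := by simp [extendZero]
  map_add' a b := by simp [extendZero_add, add_smul, Finset.sum_add_distrib]

variable {y : ℕ} (ι : ZMod n →+ ZMod k)

theorem arcCombination_apply (a : Fin (n - 1) → ZMod 2) :
    arcCombination y ι a = ∑ j, extendZero a j • arc y (ι j) := rfl

theorem arcCombination_companionShift (hι1 : ι 1 = y) (hsum : ∑ j, arc y (ι j) = 0)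
    (a : Fin (n - 1) → ZMod 2) :
    arcCombination y ι (companionShift a) = fun x => arcCombination y ι a (x - y) := by
  funext x
  have hsum_x : ∑ j, arc y (ι j) x = 0 := by simpa using congr_fun hsum x
  simp only [arcCombination_apply, Finset.sum_apply, Pi.smul_apply, smul_eq_mul,
    extendZero_companionShift, add_mul, Finset.sum_add_distrib, ← Finset.mul_sum, hsum_x,
    mul_zero, add_zero]
  refine Fintype.sum_equiv (Equiv.subRight 1) _ _ fun j => ?_
  rw [Equiv.subRight_apply, arc_sub, ← hι1, ← map_add, sub_add_cancel]

theorem arcCombination_injective [NeZero k] (hy0 : 0 < y) (hyk : y < k) (hι1 : ι 1 = y)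
    (hι : Function.Injective ι) : Function.Injective (arcCombination y ι) := by
  rw [injective_iff_map_eq_zero]
  intro a ha
  funext t
  have := eq_of_sum_smul_arc_eq_zero hy0 hyk ι hι1 hι ha ((t + 1 : ℕ) : ZMod n)
  rwa [extendZero_apply_of_val_eq a (ZMod.val_cast_of_lt (by omega)), extendZero_apply_zero] at this

theorem arcCombination_one (hsum : ∑ j, arc y (ι j) = 0) :
    arcCombination y ι (fun _ => 1) = arc y 0 := by
  have hext : ∀ j, extendZero (n := n) (fun _ => 1) j = 1 - if j = 0 then 1 else 0 := by
    intro j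
    by_cases h : j = 0
    · simp [h, extendZero]
    · simp [h, extendZero, (ZMod.val_ne_zero j).2 h]
  simp only [arcCombination_apply, hext, sub_smul, one_smul, Finset.sum_sub_distrib, hsum,
    ite_smul, zero_smul, Finset.sum_ite_eq', Finset.mem_univ, if_true, map_zero, zero_sub]
  funext x
  exact ZMod.neg_eq_self_mod_two _

end Coordinates

section Representation

variable [NeZero n] (ι : ZMod n →+ ZMod k)

abbrev arcFlip (y : ℕ) : Multiplicative (Fin (n - 1) → ZMod 2) →* Perm (ZMod k → Fin m) :=
  letterFlip.comp (arcCombination y ι).toMultiplicative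

abbrev indexShift : Multiplicative (ZMod n) →* Perm (ZMod k → Fin m) :=
  cyclicShift.comp ι.toMultiplicative

variable {y : ℕ}
  (φ : Multiplicative (ZMod n) →* MulAut (Multiplicative (Fin (n - 1) → ZMod 2)))

theorem arcCombination_map (hι1 : ι 1 = y) (hsum : ∑ j, arc y (ι j) = 0)
    (hφ : ∀ a, toAdd (φ (ofAdd 1) (ofAdd a)) = companionShift a) (r : ℕ)
    (a : Fin (n - 1) → ZMod 2) :
    arcCombination y ι (toAdd (φ (ofAdd (r : ZMod n)) (ofAdd a))) =
      fun x => arcCombination y ι a (x - ι r) := by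
  induction r generalizing a with
  | zero => simp
  | succ r ih =>
    rw [Nat.cast_succ, ofAdd_add, map_mul, MulAut.mul_apply, ← ofAdd_toAdd (φ (ofAdd 1) _), hφ,
      ih, arcCombination_companionShift ι hι1 hsum, map_add, hι1]
    funext x
    simp only [sub_sub]

theorem arcFlip_comp_eq_conj (hι1 : ι 1 = y) (hsum : ∑ j, arc y (ι j) = 0)
    (hφ : ∀ a, toAdd (φ (ofAdd 1) (ofAdd a)) = companionShift a) (g : Multiplicative (ZMod n)) :
    (arcFlip ι y).comp (φ g).toMonoidHom =
      (MulAut.conj (indexShift ι g)).toMonoidHom.comp (arcFlip (m := m) ι y) := by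
  refine MonoidHom.ext fun a => ?_
  obtain ⟨r, rfl⟩ : ∃ r : ℕ, g = ofAdd (r : ZMod n) := ⟨(toAdd g).val, by simp⟩
  change
    letterFlip (ofAdd (arcCombination y ι (toAdd (φ (ofAdd (r : ZMod n)) (ofAdd (toAdd a)))))) =
    cyclicShift (ofAdd (ι r)) * letterFlip (ofAdd (arcCombination y ι (toAdd a))) *
      (cyclicShift (ofAdd (ι r)))⁻¹
  rw [cyclicShift_mul_letterFlip_mul_inv, arcCombination_map ι φ hι1 hsum hφ]
  rfl

theorem lift_arcFlip_injective [NeZero k] (hm : 1 < m) (hy0 : 0 < y) (hyk : y < k) (hι1 : ι 1 = y)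
    (hι : Function.Injective ι) (h : ∀ g, (arcFlip ι y).comp (φ g).toMonoidHom =
      (MulAut.conj (indexShift ι g)).toMonoidHom.comp (arcFlip (m := m) ι y)) :
    Function.Injective (SemidirectProduct.lift (arcFlip ι y) (indexShift ι) h) := by
  rw [injective_iff_map_eq_one]
  intro g hg
  obtain ⟨hleft, hright⟩ := letterFlip_mul_cyclicShift_eq_one hm hg
  have hleft' := (map_eq_zero_iff _ (arcCombination_injective ι hy0 hyk hι1 hι)).1
    (ofAdd_eq_one.1 hleft)
  have hright' := (map_eq_zero_iff _ hι).1 (ofAdd_eq_one.1 hright)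
  exact SemidirectProduct.ext (by simpa using hleft') (by simpa using hright')

theorem indexShift_mem_digitShuffles (hι1 : ι 1 = y) (t : Multiplicative (ZMod n)) :
    (indexShift ι t : Perm (ZMod k → Fin m)) ∈ digitShuffles m k y := by
  have : (indexShift ι t : Perm (ZMod k → Fin m)) =
      cyclicShift (ofAdd (y : ZMod k)) ^ (toAdd t).val := by
    rw [← map_pow, ← ofAdd_nsmul, ← hι1, ← map_nsmul, nsmul_one, ZMod.natCast_zmod_val]
    rfl
  rw [this]
  exact pow_mem (Subgroup.subset_closure (by simp)) _

theorem arcFlip_mem_digitShuffles (hι1 : ι 1 = y) (a : Multiplicative (Fin (n - 1) → ZMod 2)) :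
    (arcFlip ι y a : Perm (ZMod k → Fin m)) ∈ digitShuffles m k y := by
  have hflip : ∀ j, (letterFlip (ofAdd (arc y (ι j))) : Perm (ZMod k → Fin m)) ∈
      digitShuffles m k y := by
    intro j
    have hconj := cyclicShift_mul_letterFlip_mul_inv (m := m) (ofAdd (ι j)) (ofAdd (arc y 0))
    simp only [toAdd_ofAdd, arc_sub, zero_add] at hconj
    rw [← hconj, ← mul_inv_cancel_right (letterFlip (ofAdd (arc y 0)))
      (cyclicShift (ofAdd (y : ZMod k)))]
    have hτ := indexShift_mem_digitShuffles (m := m) ι hι1 (ofAdd 1)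
    rw [MonoidHom.comp_apply, AddMonoidHom.toMultiplicative_apply_apply, toAdd_ofAdd, hι1] at hτ
    refine mul_mem (mul_mem (indexShift_mem_digitShuffles ι hι1 (ofAdd j)) ?_)
      (inv_mem (indexShift_mem_digitShuffles ι hι1 (ofAdd j)))
    exact mul_mem (Subgroup.subset_closure (by simp)) (inv_mem hτ)
  change letterFlip (ofAdd (arcCombination y ι (toAdd a))) ∈ _
  rw [arcCombination_apply]
  refine Finset.sum_induction _ (fun e => letterFlip (ofAdd e) ∈ digitShuffles m k y)
    (fun e f he hf => by rw [ofAdd_add, map_mul]; exact mul_mem he hf)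
    (by rw [ofAdd_zero, map_one]; exact one_mem _) fun j _ => ?_
  rcases ZMod.eq_zero_or_eq_one (extendZero (toAdd a) j) with h0 | h1
  · rw [h0, zero_smul, ofAdd_zero, map_one]
    exact one_mem _
  · rw [h1, one_smul]
    exact hflip j

theorem range_lift_arcFlip (hι1 : ι 1 = y) (hsum : ∑ j, arc y (ι j) = 0)
    (h : ∀ g, (arcFlip ι y).comp (φ g).toMonoidHom =
      (MulAut.conj (indexShift ι g)).toMonoidHom.comp (arcFlip (m := m) ι y)) :
    (SemidirectProduct.lift (arcFlip ι y) (indexShift ι) h).range = digitShuffles m k y := by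
  apply le_antisymm
  · rintro _ ⟨g, rfl⟩
    exact mul_mem (arcFlip_mem_digitShuffles ι hι1 g.left)
      (indexShift_mem_digitShuffles ι hι1 g.right)
  · rw [digitShuffles, Subgroup.closure_le]
    rintro _ (rfl | rfl)
    · refine ⟨SemidirectProduct.inl (ofAdd fun _ => 1) * SemidirectProduct.inr (ofAdd 1), ?_⟩
      simp [arcCombination_one ι hsum, hι1]
    · exact ⟨SemidirectProduct.inr (ofAdd 1), by simp [hι1]⟩

theorem nonempty_closure_mulEquiv_semidirectProduct [NeZero k] {u : ℕ} (hm : 1 < m) (hy0 : 0 < y)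
    (hyk : y < k) (hn : addOrderOf (y : ZMod k) = n) (hnyk : n * y = u * k) (heven : Even u)
    (Oy Iy : Perm (Fin (m ^ k)))
    (hOy : ∀ i, (Oy i : ℕ) = m ^ y * (i % m ^ (k - y)) + i / m ^ (k - y))
    (hIy : ∀ i, (Iy i : ℕ) = m ^ y * (i % m ^ (k - y)) + (m ^ y - 1 - i / m ^ (k - y)))
    (hφ : ∀ a, toAdd (φ (ofAdd 1) (ofAdd a)) = companionShift a) :
    Nonempty (Subgroup.closure {Iy, Oy} ≃*
      Multiplicative (Fin (n - 1) → ZMod 2) ⋊[φ] Multiplicative (ZMod n)) := by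
  let f : {f : ℤ →+ ZMod k // f n = 0} := ⟨zmultiplesHom _ (y : ZMod k), by
    rw [zmultiplesHom_apply, ← hn, natCast_zsmul, addOrderOf_nsmul_eq_zero]⟩
  let ι := ZMod.lift n f
  have hι1 : ι 1 = y := by simpa [f] using ZMod.lift_coe n f 1
  have hι : Function.Injective ι := (ZMod.lift_injective n).2 fun j hj => by
    rwa [ZMod.intCast_zmod_eq_zero_iff_dvd, ← hn, addOrderOf_dvd_iff_zsmul_eq_zero]
  have hsum := sum_arc_eq_zero hy0 hyk hnyk heven ι hι1
  have hconj := arcFlip_comp_eq_conj (m := m) ι φ hι1 hsum hφ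
  have hmap := map_closure_inOutShuffle (by omega) hyk Oy Iy hOy hIy
  rw [← range_lift_arcFlip ι φ hι1 hsum hconj] at hmap
  exact ⟨((digitEquiv m k).permCongrHom.subgroupMap _).trans ((MulEquiv.subgroupCongr hmap).trans
    (MonoidHom.ofInjective (lift_arcFlip_injective ι φ hm hy0 hyk hι1 hι hconj)).symm)⟩

end Representation

end InOutShuffle

open InOutShuffle in
/-- (Theorem 1.2(2) of the paper.) Let `m, k > 1`, let `y` be a positive
integer with `y < k`, and set `c = gcd(y, k)`.  If `y/c` is even, then on a deck of `m^k`
cards the group `⟨I_{m^y}, O_{m^y}⟩` generated by the in and out `m^y`-shuffles (cut into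
`m^y` stacks of `m^(k−y)` cards) is isomorphic to `(ℤ/2ℤ)^((k/c)−1) ⋊_φ ℤ/(k/c)ℤ`, where
the generator `1` of `ℤ/(k/c)ℤ` acts on `(ℤ/2ℤ)^((k/c)−1)` by
`φ(1)·(a_1, …, a_{(k/c)−1}) = (a_{(k/c)−1}, a_1 + a_{(k/c)−1}, …, a_{(k/c)−2} + a_{(k/c)−1})`;
in particular this group has order `2^((k/c)−1)·(k/c)`, independent of `m`. -/
theorem shuffle_group_even_case (m k y : ℕ) (hm : 1 < m)
    (hy0 : 0 < y) (hyk : y < k) (c : ℕ) (hc : c = Nat.gcd y k) (heven : Even (y / c))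
    (Oy Iy : Equiv.Perm (Fin (m ^ k)))
    (hOy : ∀ i : Fin (m ^ k),
      (Oy i : ℕ) = m ^ y * ((i : ℕ) % m ^ (k - y)) + (i : ℕ) / m ^ (k - y))
    (hIy : ∀ i : Fin (m ^ k),
      (Iy i : ℕ) = m ^ y * ((i : ℕ) % m ^ (k - y)) + (m ^ y - 1 - (i : ℕ) / m ^ (k - y)))
    (φ : Multiplicative (ZMod (k / c)) →*
      MulAut (Multiplicative (Fin (k / c - 1) → ZMod 2)))
    (hφ : ∀ (a : Fin (k / c - 1) → ZMod 2) (t : Fin (k / c - 1)),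
      Multiplicative.toAdd
          ((φ (Multiplicative.ofAdd (1 : ZMod (k / c)))) (Multiplicative.ofAdd a)) t =
        if (t : ℕ) = 0 then a ⟨k / c - 2, by have := t.isLt; omega⟩
        else a ⟨(t : ℕ) - 1, by have := t.isLt; omega⟩
          + a ⟨k / c - 2, by have := t.isLt; omega⟩) :
    Nonempty (↥(Subgroup.closure {Iy, Oy}) ≃*
      Multiplicative (Fin (k / c - 1) → ZMod 2) ⋊[φ] Multiplicative (ZMod (k / c))) ∧
    Nat.card ↥(Subgroup.closure {Iy, Oy}) = 2 ^ (k / c - 1) * (k / c) := by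
  have : NeZero k := ⟨by omega⟩
  have hck : c ∣ k := hc ▸ Nat.gcd_dvd_right y k
  have hcy : c ∣ y := hc ▸ Nat.gcd_dvd_left y k
  have hn : addOrderOf (y : ZMod k) = k / c := by
    rw [ZMod.addOrderOf_coe _ (NeZero.ne k), hc, Nat.gcd_comm]
  have : NeZero (k / c) := ⟨hn ▸ (addOrderOf_pos _).ne'⟩
  have hnyk : k / c * y = y / c * k := by
    rw [Nat.div_mul_right_comm hck, Nat.div_mul_right_comm hcy, Nat.mul_comm]
  obtain ⟨e⟩ := nonempty_closure_mulEquiv_semidirectProduct φ hm hy0 hyk hn hnyk heven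
    Oy Iy hOy hIy fun a => funext (hφ a)
  refine ⟨⟨e⟩, ?_⟩
  rw [Nat.card_congr e.toEquiv, SemidirectProduct.card]
  simp [Nat.card_eq_fintype_card]
end
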